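/- For integers k ≥ 0 and l ≤ −2, ∑_{a=0}^{k−1} ∑_{b=0}^{−l+1} (−1)^{a+b+l} C(2k,a)·C(−l+1,b)·C(b−l+k−a−1, k−a+1) = −(−1)^{k+l}·C(2k+2l, k+l). -/
import Mathlib


/-- Generalized binomial coefficient: `0` for `k < 0`; usual binomial for `n ≥ 0`
(zero when `k > n`); for `n < 0`: `(-1)^k * C (k - n - 1) k` when `k ≥ 0`,
`(-1)^(n-k) * C (-k - 1) (n - k)` when `k ≤ n`, and `0` otherwise. -/
def C (n k : ℤ) : ℤ :=
  if 0 ≤ n then (if 0 ≤ k then (n.toNat.choose k.toNat : ℤ) else 0)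
  else if 0 ≤ k then (-1) ^ k.toNat * ((k - n - 1).toNat.choose k.toNat : ℤ)
  else if k ≤ n then (-1) ^ (n - k).toNat * ((-k - 1).toNat.choose (n - k).toNat : ℤ)
  else 0

open Finset

/-- `D x j = choose x j` for `j ≥ 0`, else `0`. -/
def D (x : ℕ) (j : ℤ) : ℤ := if 0 ≤ j then (x.choose j.toNat : ℤ) else 0

lemma D_pascal (x : ℕ) (j : ℤ) : D x j - D (x+1) j = -D x (j-1) := by
  unfold D
  rcases lt_trichotomy j 0 with h | h | h
  · rw [if_neg (not_le.2 h), if_neg (not_le.2 h), if_neg (not_le.2 (by omega))]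
    ring
  · subst h; norm_num
  · rw [if_pos h.le, if_pos h.le, if_pos (by omega : (0:ℤ) ≤ j - 1)]
    have hj : j.toNat = (j-1).toNat + 1 := by omega
    rw [hj, Nat.choose_succ_succ]
    push_cast
    ring

lemma lemB (n : ℕ) : ∀ (x r : ℕ),
    ∑ b ∈ range (n+1), (-1:ℤ)^b * (n.choose b) * ((b + x).choose r) =
    (-1)^n * D x ((r:ℤ) - n) := by
  induction n with
  | zero => intro x r; simp [D]
  | succ n ih =>
    intro x r
    have h1 : ∑ b ∈ range (n+1+1), (-1:ℤ)^b * ((n+1).choose b) * ((b + x).choose r)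
        = (∑ b ∈ range (n+1), (-1:ℤ)^(b+1) * ((n+1).choose (b+1)) * ((b+1 + x).choose r))
          + (-1:ℤ)^0 * ((n+1).choose 0) * ((0 + x).choose r) :=
      Finset.sum_range_succ' _ (n+1)
    have h2 : ∀ b, (-1:ℤ)^(b+1) * ((n+1).choose (b+1)) * ((b+1 + x).choose r)
        = (-1:ℤ)^(b+1) * (n.choose b) * ((b + (x+1)).choose r)
          + (-1:ℤ)^(b+1) * (n.choose (b+1)) * ((b+1 + x).choose r) := by
      intro b
      rw [Nat.choose_succ_succ]
      have : b + 1 + x = b + (x+1) := by omega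
      rw [this]
      push_cast
      ring
    rw [h1]
    rw [Finset.sum_congr rfl (fun b _ => h2 b), Finset.sum_add_distrib]
    have h3 : ∑ b ∈ range (n+1), (-1:ℤ)^(b+1) * (n.choose b) * ((b + (x+1)).choose r)
        = -((-1:ℤ)^n * D (x+1) ((r:ℤ) - n)) := by
      rw [← ih (x+1) r, ← Finset.sum_neg_distrib]
      exact Finset.sum_congr rfl (fun b _ => by ring)
    have h4 : (∑ b ∈ range (n+1), (-1:ℤ)^(b+1) * (n.choose (b+1)) * ((b+1 + x).choose r))
          + (-1:ℤ)^0 * ((n+1).choose 0) * ((0 + x).choose r)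
        = (-1:ℤ)^n * D x ((r:ℤ) - n) := by
      have h5 : (∑ b ∈ range (n+1), (-1:ℤ)^(b+1) * (n.choose (b+1)) * ((b+1 + x).choose r))
            + (-1:ℤ)^0 * (n.choose 0) * ((0 + x).choose r)
          = ∑ b ∈ range (n+1+1), (-1:ℤ)^b * (n.choose b) * ((b + x).choose r) :=
        (Finset.sum_range_succ' (fun b => (-1:ℤ)^b * (n.choose b) * ((b + x).choose r)) (n+1)).symm
      rw [show ((n+1).choose 0) = (n.choose 0) by simp, h5,
        Finset.sum_range_succ, Nat.choose_succ_self]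
      push_cast
      rw [ih x r]
      ring
    rw [add_assoc, h4, h3]
    have := D_pascal x ((r:ℤ) - n)
    have hrw : (r:ℤ) - n - 1 = (r:ℤ) - (n+1) := by push_cast; ring
    rw [hrw] at this
    push_cast
    rw [pow_succ]
    linear_combination ((-1:ℤ)^n) * this

def g (n s K : ℕ) : ℤ :=
  if s + 1 ≤ n then (-1)^K * ((n - s - 1).choose K) else ((K + s - n).choose K)

lemma g_zero (n s : ℕ) : g n s 0 = 1 := by
  unfold g; split <;> simp

lemma g_succ (n s K : ℕ) : g (n+1) s (K+1) = g n s (K+1) - g n s K := by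
  unfold g
  rcases lt_trichotomy n s with h | h | h
  · rw [if_neg (by omega), if_neg (by omega), if_neg (by omega)]
    have e1 : K + 1 + s - (n + 1) = (K + (s - n - 1)) + 1 := by omega
    have e2 : K + 1 + s - n = ((K + (s - n - 1)) + 1) + 1 := by omega
    have e3 : K + s - n = (K + (s - n - 1)) + 1 := by omega
    rw [e1, e2, e3, Nat.choose_succ_succ ((K + (s - n - 1)) + 1) K]
    push_cast
    ring
  · subst h
    rw [if_pos (by omega), if_neg (by omega), if_neg (by omega)]
    have e1 : n + 1 - n - 1 = 0 := by omega
    have e2 : K + 1 + n - n = K + 1 := by omega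
    have e3 : K + n - n = K := by omega
    rw [e1, e2, e3, Nat.choose_eq_zero_of_lt (by omega : (0:ℕ) < K+1), Nat.choose_self, Nat.choose_self]
    simp
  · rw [if_pos (by omega), if_pos (by omega), if_pos (by omega)]
    have e1 : n + 1 - s - 1 = (n - s - 1) + 1 := by omega
    rw [e1, Nat.choose_succ_succ (n - s - 1) K]
    push_cast
    ring

lemma lemA (n : ℕ) : ∀ (s K : ℕ),
    ∑ a ∈ range (K+1), (-1:ℤ)^a * (n.choose a) * ((K - a + s).choose s) = g n s K := by
  induction n with
  | zero =>
    intro s K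
    have h0 : ∀ a ∈ range (K+1), (-1:ℤ)^a * ((0:ℕ).choose a) * ((K - a + s).choose s)
        = if a = 0 then ((K + s).choose s : ℤ) else 0 := by
      intro a _
      rcases Nat.eq_zero_or_pos a with rfl | ha
      · simp
      · rw [if_neg (by omega), Nat.choose_eq_zero_of_lt (by omega)]
        push_cast; ring
    rw [Finset.sum_congr rfl h0, Finset.sum_ite_eq' (range (K+1)) 0 _,
      if_pos (by simp)]
    unfold g
    rw [if_neg (by omega)]
    have : K + s - 0 = K + s := by omega
    rw [this]
    rw [show (K+s).choose K = (K+s).choose s by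
      rw [← Nat.choose_symm (by omega : K ≤ K + s)]; congr 1; omega]
  | succ n ih =>
    intro s K
    rcases Nat.eq_zero_or_pos K with rfl | hK
    · simp [g_zero]
    obtain ⟨K', rfl⟩ : ∃ K', K = K' + 1 := ⟨K - 1, by omega⟩
    have h1 : ∑ a ∈ range (K'+1+1), (-1:ℤ)^a * ((n+1).choose a) * ((K'+1 - a + s).choose s)
        = (∑ a ∈ range (K'+1), (-1:ℤ)^(a+1) * ((n+1).choose (a+1)) * ((K'+1 - (a+1) + s).choose s))
          + (-1:ℤ)^0 * ((n+1).choose 0) * ((K'+1 - 0 + s).choose s) :=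
      Finset.sum_range_succ' _ (K'+1)
    have h2 : ∀ a, (-1:ℤ)^(a+1) * ((n+1).choose (a+1)) * ((K'+1 - (a+1) + s).choose s)
        = -((-1:ℤ)^a * (n.choose a) * ((K' - a + s).choose s))
          + (-1:ℤ)^(a+1) * (n.choose (a+1)) * ((K'+1 - (a+1) + s).choose s) := by
      intro a
      rw [Nat.choose_succ_succ, show K' + 1 - (a+1) = K' - a from by omega]
      push_cast
      ring
    rw [h1, Finset.sum_congr rfl (fun a _ => h2 a), Finset.sum_add_distrib]
    have h3 : ∑ a ∈ range (K'+1), -((-1:ℤ)^a * (n.choose a) * ((K' - a + s).choose s))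
        = -(g n s K') := by
      rw [← ih s K', ← Finset.sum_neg_distrib]
    have h4 : (∑ a ∈ range (K'+1), (-1:ℤ)^(a+1) * (n.choose (a+1)) * ((K'+1 - (a+1) + s).choose s))
          + (-1:ℤ)^0 * ((n+1).choose 0) * ((K'+1 - 0 + s).choose s)
        = g n s (K'+1) := by
      have h5 : (∑ a ∈ range (K'+1), (-1:ℤ)^(a+1) * (n.choose (a+1)) * ((K'+1 - (a+1) + s).choose s))
            + (-1:ℤ)^0 * (n.choose 0) * ((K'+1 - 0 + s).choose s)
          = ∑ a ∈ range (K'+1+1), (-1:ℤ)^a * (n.choose a) * ((K'+1 - a + s).choose s) :=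
        (Finset.sum_range_succ' (fun a => (-1:ℤ)^a * (n.choose a) * ((K'+1 - a + s).choose s)) (K'+1)).symm
      rw [show ((n+1).choose 0) = (n.choose 0) by simp, h5, ih s (K'+1)]
    rw [add_assoc, h4, h3, g_succ]
    ring

lemma C_nat (n j : ℕ) : C (n:ℤ) (j:ℤ) = (n.choose j : ℤ) := by
  simp [C]

/-- For `k ≥ 0`, `l ≤ −2`:
`∑_{a=0}^{k−1} ∑_{b=0}^{−l+1} (−1)^{a+b+l} C(2k,a) C(−l+1,b) C(b−l+k−a−1, k−a+1)
  = −(−1)^{k+l} C(2k+2l, k+l)`. -/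
theorem stmt13 (k : ℕ) (l : ℤ) (hl : l ≤ -2) :
    ∑ a ∈ Finset.range k, ∑ b ∈ Finset.range (-l + 2).toNat,
        (-1 : ℚ) ^ ((a : ℤ) + b + l) *
          (C (2 * k) a * C (-l + 1) b *
            C ((b : ℤ) - l + k - a - 1) ((k : ℤ) - a + 1) : ℤ) =
      -((-1 : ℚ) ^ ((k : ℤ) + l)) * (C (2 * k + 2 * l) ((k : ℤ) + l) : ℤ) := by
  set m : ℕ := (-l).toNat with hmdef
  have hlm : l = -(m:ℤ) := by omega
  have hm2 : 2 ≤ m := by omega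
  rw [show (-l + 2).toNat = m + 2 from by omega]
  -- sign helper
  have hz : ∀ i : ℕ, (-1:ℚ) ^ ((i:ℤ) - (m:ℤ)) = (-1:ℚ)^i * (-1:ℚ)^m := by
    intro i
    rw [sub_eq_add_neg, zpow_add₀ (by norm_num : (-1:ℚ) ≠ 0), zpow_natCast,
      zpow_neg, zpow_natCast, ← inv_pow]
    norm_num
  have e1 : ∀ a b : ℕ, (-1:ℚ) ^ ((a:ℤ) + b + l) = ((-1:ℤ)^(a+b) : ℚ) * (-1:ℚ)^m := by
    intro a b
    rw [hlm, show (a:ℤ) + b + -(m:ℤ) = (((a+b:ℕ)):ℤ) - (m:ℤ) from by push_cast; ring, hz]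
    push_cast; ring
  have e2 : (-1:ℚ) ^ ((k:ℤ) + l) = ((-1:ℤ)^k : ℚ) * (-1:ℚ)^m := by
    rw [hlm, show (k:ℤ) + -(m:ℤ) = ((k:ℕ):ℤ) - (m:ℤ) from by push_cast; ring, hz]
    push_cast; ring
  -- the key integer identity
  have key2 : ∑ a ∈ range k, ∑ b ∈ range (m+2),
      ((-1:ℤ)^(a+b) * (-1)^m * (C (2 * k) a * C (-l + 1) b *
          C ((b : ℤ) - l + k - a - 1) ((k : ℤ) - a + 1)))
      = -((-1:ℤ)^k * (-1)^m) * C (2 * k + 2 * l) ((k : ℤ) + l) := by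
    have inner : ∀ a, a < k →
        ∑ b ∈ range (m+2), ((-1:ℤ)^(a+b) * (-1)^m * (C (2 * k) a * C (-l + 1) b *
            C ((b : ℤ) - l + k - a - 1) ((k : ℤ) - a + 1)))
        = -((-1:ℤ)^a * ((2*k).choose a : ℤ) * D (m + (k-1-a)) ((k:ℤ) - a - m)) := by
      intro a ha
      have hterm : ∀ b, b < m + 2 →
          ((-1:ℤ)^(a+b) * (-1)^m * (C (2 * k) a * C (-l + 1) b *
              C ((b : ℤ) - l + k - a - 1) ((k : ℤ) - a + 1)))
          = ((-1:ℤ)^(a+m) * ((2*k).choose a : ℤ)) *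
              ((-1:ℤ)^b * (((m+1).choose b : ℤ)) * (((b + (m + (k-1-a))).choose (k-a+1) : ℤ))) := by
        intro b hb
        have c1 : C (2 * (k:ℤ)) (a:ℤ) = ((2*k).choose a : ℤ) := by
          rw [show (2 * (k:ℤ)) = ((2*k : ℕ) : ℤ) from by push_cast; ring, C_nat]
        have c2 : C (-l + 1) (b:ℤ) = (((m+1).choose b : ℤ)) := by
          rw [show (-l + 1) = ((m+1 : ℕ) : ℤ) from by omega, C_nat]
        have c3 : C ((b : ℤ) - l + k - a - 1) ((k : ℤ) - a + 1)
            = (((b + (m + (k-1-a))).choose (k-a+1) : ℤ)) := by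
          rw [show ((b : ℤ) - l + k - a - 1) = (((b + (m + (k-1-a)) : ℕ)) : ℤ) from by
              push_cast; omega,
            show ((k : ℤ) - a + 1) = (((k - a + 1 : ℕ)) : ℤ) from by push_cast; omega, C_nat]
        rw [c1, c2, c3, pow_add, pow_add]
        ring
      rw [Finset.sum_congr rfl (fun b hb => hterm b (mem_range.1 hb)), ← Finset.mul_sum,
        show m + 2 = (m+1) + 1 from rfl, lemB (m+1) (m + (k-1-a)) (k-a+1)]
      rw [show ((k-a+1 : ℕ) : ℤ) - ((m+1 : ℕ) : ℤ) = (k:ℤ) - a - m from by push_cast; omega]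
      have hsg : (-1:ℤ)^(a+m) * (-1:ℤ)^(m+1) = -(-1:ℤ)^a := by
        have h2 : (-1:ℤ)^(2*m) = 1 := by simp [pow_mul]
        rw [← pow_add, show a + m + (m+1) = 2*m + (a+1) from by omega, pow_add, h2, pow_succ]
        ring
      push_cast
      rw [← mul_assoc, mul_comm ((-1:ℤ)^(a+m) * ((2*k).choose a : ℤ)) ((-1:ℤ)^(m+1))]
      rw [show (-1:ℤ)^(m+1) * ((-1:ℤ)^(a+m) * ((2*k).choose a : ℤ)) =
        ((-1:ℤ)^(a+m) * (-1:ℤ)^(m+1)) * ((2*k).choose a : ℤ) from by ring, hsg]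
      ring
    rw [Finset.sum_congr rfl (fun a ha => inner a (mem_range.1 ha))]
    by_cases hkm : k < m
    · have hz2 : ∀ a ∈ range k, -((-1:ℤ)^a * ((2*k).choose a : ℤ) * D (m + (k-1-a)) ((k:ℤ) - a - m)) = 0 := by
        intro a ha
        unfold D; rw [if_neg (by simp only [mem_range] at ha; omega)]
        ring
      rw [Finset.sum_congr rfl hz2, Finset.sum_const, smul_zero]
      have : C (2 * (k:ℤ) + 2 * l) ((k : ℤ) + l) = 0 := by
        unfold C
        split_ifs with h1 h2 h3 <;> first | rfl | (exfalso; omega)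
      rw [this]; ring
    · push_neg at hkm
      have hKk : k - m + 1 ≤ k := by omega
      rw [← Finset.sum_subset (Finset.range_subset_range.2 hKk) (by
        intro a ha hna
        simp only [mem_range] at ha hna
        unfold D; rw [if_neg (by omega)]
        ring)]
      have hconv : ∀ a ∈ range (k - m + 1),
          -((-1:ℤ)^a * ((2*k).choose a : ℤ) * D (m + (k-1-a)) ((k:ℤ) - a - m))
          = -((-1:ℤ)^a * ((2*k).choose a : ℤ) * (((k - m) - a + (2*m-1)).choose (2*m-1) : ℤ)) := by
        intro a ha
        simp only [mem_range] at ha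
        unfold D; rw [if_pos (by omega : (0:ℤ) ≤ (k:ℤ) - a - m)]
        congr 2
        have h1 : ((k:ℤ) - a - m).toNat = (k - m) - a := by omega
        have h2 : m + (k-1-a) = ((k-m) - a) + (2*m-1) := by omega
        rw [h1, h2]
        rw [show (((k-m) - a) + (2*m-1)).choose ((k-m)-a)
            = (((k-m) - a) + (2*m-1)).choose ((((k-m) - a) + (2*m-1)) - (2*m-1)) from by
          congr 1; omega]
        rw [Nat.choose_symm (by omega)]
      rw [Finset.sum_congr rfl hconv]
      rw [show (∑ a ∈ range (k - m + 1),
          -((-1:ℤ)^a * ((2*k).choose a : ℤ) * (((k - m) - a + (2*m-1)).choose (2*m-1) : ℤ)))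
        = -(∑ a ∈ range ((k-m) + 1),
          ((-1:ℤ)^a * ((2*k).choose a : ℤ) * (((k - m) - a + (2*m-1)).choose (2*m-1) : ℤ))) from by
        rw [← Finset.sum_neg_distrib]]
      rw [lemA (2*k) (2*m-1) (k-m)]
      unfold g
      rw [if_pos (by omega : (2*m-1) + 1 ≤ 2*k)]
      rw [show 2*k - (2*m-1) - 1 = 2*(k-m) from by omega]
      rw [show (2 * (k:ℤ) + 2 * l) = ((2*(k-m) : ℕ) : ℤ) from by push_cast; omega,
        show ((k:ℤ) + l) = (((k-m) : ℕ) : ℤ) from by push_cast; omega, C_nat]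
      have hsgn : (-1:ℤ)^k * (-1:ℤ)^m = (-1:ℤ)^(k-m) := by
        have h2 : (-1:ℤ)^(2*m) = 1 := by simp [pow_mul]
        rw [← pow_add, show k + m = (k-m) + 2*m from by omega, pow_add, h2, mul_one]
      rw [← hsgn]
      ring
  -- assemble over ℚ
  calc ∑ a ∈ Finset.range k, ∑ b ∈ Finset.range (m+2),
        (-1 : ℚ) ^ ((a : ℤ) + b + l) *
          (C (2 * k) a * C (-l + 1) b *
            C ((b : ℤ) - l + k - a - 1) ((k : ℤ) - a + 1) : ℤ)
      = ∑ a ∈ Finset.range k, ∑ b ∈ Finset.range (m+2),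
        ((((-1:ℤ)^(a+b) * (-1)^m * (C (2 * k) a * C (-l + 1) b *
            C ((b : ℤ) - l + k - a - 1) ((k : ℤ) - a + 1))) : ℤ) : ℚ) := by
        refine Finset.sum_congr rfl fun a _ => Finset.sum_congr rfl fun b _ => ?_
        rw [e1 a b]
        push_cast
        ring
    _ = (((∑ a ∈ range k, ∑ b ∈ range (m+2),
        ((-1:ℤ)^(a+b) * (-1)^m * (C (2 * k) a * C (-l + 1) b *
            C ((b : ℤ) - l + k - a - 1) ((k : ℤ) - a + 1)))) : ℤ) : ℚ) := by
        push_cast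
        rfl
    _ = (((-((-1:ℤ)^k * (-1)^m) * C (2 * k + 2 * l) ((k : ℤ) + l)) : ℤ) : ℚ) := by
        rw [key2]
    _ = -((-1 : ℚ) ^ ((k : ℤ) + l)) * (C (2 * k + 2 * l) ((k : ℤ) + l) : ℤ) := by
        rw [e2]
        push_cast
        ring
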